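/- arXiv:2405.04451 — 2 statements merged into one kernel-verified Lean document; each statement's English description precedes it below -/
import Mathlib

section
/- For every x ∈ (0, 1], 2·W(e·x) ≤ 1 + x, where W is the principal branch of the Lambert W function. Equivalently, e^{1 − 2W(e·x)} ≥ e^{−x} for x ∈ (0,1]. -/
/-- For `x ∈ (0,1]`, `2·W(e·x) ≤ 1 + x`, where `W` is the principal Lambert W
function, characterized by `W(y)·e^{W(y)} = y` and `W(y) ≥ 0` for `y ≥ 0`.
Equivalently, `e^{1 − 2W(e·x)} ≥ e^{−x}`. -/
theorem two_lambertW_e_mul_le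
    (W : ℝ → ℝ)
    (hW : ∀ y, 0 ≤ y → 0 ≤ W y ∧ W y * Real.exp (W y) = y)
    (x : ℝ) (hx0 : 0 < x) (hx1 : x ≤ 1) :
    2 * W (Real.exp 1 * x) ≤ 1 + x := by
  obtain ⟨hw0, hwe⟩ := hW (Real.exp 1 * x)
    (by positivity)
  set w := W (Real.exp 1 * x) with hw
  have h1 : Real.exp w = Real.exp (w - 1) * Real.exp 1 := by
    rw [← Real.exp_add]; ring_nf
  have h2 : w * Real.exp (w - 1) = x := by
    have he : (0:ℝ) < Real.exp 1 := Real.exp_pos 1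
    have := hwe
    rw [h1] at this
    nlinarith
  have h3 : w ≤ Real.exp (w - 1) := by
    have := Real.add_one_le_exp (w - 1)
    linarith
  nlinarith [sq_nonneg (w - 1), Real.exp_pos (w - 1)]
end

section
/- Let A > 0, P ≥ 0, Cφ = P + A, and A ≤ Δ ≤ Cφ. With M(z̃) defined by M(z̃) = Cφ z̃² e^{−(P−A)z̃²} if Cφ z̃² ≤ 1 and M(z̃) = e^{2A z̃² − 1} if Cφ z̃² ≥ 1, the maximum of λ̃ over pairs (λ̃, z̃) ∈ ℝ≥0² satisfying λ̃ e^{A z̃²} ≤ z̃² and λ̃ M(z̃) Δ ≤ 1 equals e^{1 − 2W(eA/Δ)}/Δ, attained at z̃ = √(W(eA/Δ)/A), where W is the principal Lambert W function. -/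
/-!
Put `w = W(eA/Δ)`, so that `Δ w e^w = eA`; since `A ≤ Δ` this forces `0 < w ≤ 1` and `A ≤ Δ w`.
Split a feasible pair `(λ, z)` at `z² = w/A`. Below it, the self-map condition gives
`λ ≤ z² e^{-Az²} ≤ (w/A) e^{-w}`, because `t ↦ t e^{-At}` increases on `[0, 1/A]`. Above it,
`(P + A) z² ≥ Δ w / A ≥ 1`, so `M(z) = e^{2Az² - 1}` and the contraction condition gives
`λ ≤ e^{1 - 2Az²}/Δ ≤ e^{1 - 2w}/Δ`. The Lambert equation says exactly that the two bounds agree,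
and at `z² = w/A` both constraints hold with equality.
-/

open Real

lemma mul_exp_neg_mul_le_of_le {A a b : ℝ} (hb : 0 ≤ b) (hab : a ≤ b) (hAb : A * b ≤ 1) :
    a * exp (-(A * a)) ≤ b * exp (-(A * b)) := by
  have h : a ≤ b * exp (A * (a - b)) := by
    nlinarith [mul_le_mul_of_nonneg_left (add_one_le_exp (A * (a - b))) hb,
      mul_nonneg (sub_nonneg.2 hab) (sub_nonneg.2 hAb)]
  calc a * exp (-(A * a)) ≤ b * exp (A * (a - b)) * exp (-(A * a)) := by gcongr
    _ = b * exp (-(A * b)) := by rw [mul_assoc, ← exp_add]; ring_nf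

lemma le_mul_exp_neg_of_mul_exp_le {A l t : ℝ} (h : l * exp (A * t) ≤ t) :
    l ≤ t * exp (-(A * t)) := by
  rwa [exp_neg, ← div_eq_mul_inv, le_div_iff₀ (exp_pos _)]

lemma le_exp_neg_div_of_mul_exp_mul_le {Δ l x : ℝ} (hΔ : 0 < Δ) (h : l * exp x * Δ ≤ 1) :
    l ≤ exp (-x) / Δ := by
  rw [le_div_iff₀ hΔ, exp_neg, ← one_div, le_div_iff₀ (exp_pos _)]
  linarith

lemma le_one_of_mul_exp_le_exp_one {w : ℝ} (h : w * exp w ≤ exp 1) : w ≤ 1 := by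
  by_contra! hw
  nlinarith [exp_lt_exp.2 hw, mul_pos (sub_pos.2 hw) (exp_pos w)]

section LambertRoot

variable {A Δ w : ℝ}

lemma lambertRoot_le_one (hA : 0 < A) (hAΔ : A ≤ Δ) (hw : w * exp w = exp 1 * A / Δ) :
    w ≤ 1 := by
  refine le_one_of_mul_exp_le_exp_one (hw ▸ ?_)
  rw [div_le_iff₀ (hA.trans_le hAΔ)]
  gcongr

lemma le_mul_lambertRoot (hA : 0 < A) (hAΔ : A ≤ Δ) (hw0 : 0 ≤ w)
    (hw : w * exp w = exp 1 * A / Δ) : A ≤ Δ * w := by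
  have hΔ : 0 < Δ := hA.trans_le hAΔ
  have hexp : exp w ≤ exp 1 := exp_le_exp.2 (lambertRoot_le_one hA hAΔ hw)
  have hkey : exp 1 * A = Δ * w * exp w := by rw [mul_assoc, hw]; field_simp
  nlinarith [mul_le_mul_of_nonneg_left hexp (mul_nonneg hΔ.le hw0), exp_pos 1]

lemma exp_one_sub_two_mul_div_mul_exp (hA : 0 < A) (hΔ : 0 < Δ)
    (hw : w * exp w = exp 1 * A / Δ) : exp (1 - 2 * w) / Δ * exp w = w / A := by
  have hexp : exp (1 - 2 * w) * exp w * exp w = exp 1 := by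
    rw [← exp_add, ← exp_add]; ring_nf
  rw [div_mul_eq_mul_div, div_eq_div_iff hΔ.ne' hA.ne']
  calc exp (1 - 2 * w) * exp w * A = exp (1 - 2 * w) * exp w * exp w * A / exp w := by
        field_simp
    _ = Δ * w * exp w / exp w := by rw [hexp, mul_assoc, hw]; field_simp
    _ = w * Δ := by field_simp

end LambertRoot

noncomputable def contractionFactor (A P z : ℝ) : ℝ :=
  if (P + A) * z ^ 2 ≤ 1 then (P + A) * z ^ 2 * exp (-((P - A) * z ^ 2))
  else exp (2 * A * z ^ 2 - 1)

def feasiblePairs (A P Δ : ℝ) : Set (ℝ × ℝ) :=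
  {p | 0 ≤ p.1 ∧ 0 ≤ p.2 ∧ p.1 * exp (A * p.2 ^ 2) ≤ p.2 ^ 2 ∧
    p.1 * contractionFactor A P p.2 * Δ ≤ 1}

section Optimum

variable {A P Δ w : ℝ}

/-- On the boundary `(P + A) z² = 1` both branches of `contractionFactor` agree. -/
lemma contractionFactor_of_one_le {z : ℝ} (h : 1 ≤ (P + A) * z ^ 2) :
    contractionFactor A P z = exp (2 * A * z ^ 2 - 1) := by
  unfold contractionFactor
  split_ifs with h'
  · have hone : (P + A) * z ^ 2 = 1 := le_antisymm h' h
    rw [hone, one_mul]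
    congr 1
    linarith
  · rfl

lemma contractionFactor_of_lambertRoot_div_le (hA : 0 < A) (hAΔ : A ≤ Δ) (hΔC : Δ ≤ P + A)
    (hw0 : 0 ≤ w) (hw : w * exp w = exp 1 * A / Δ) {z : ℝ} (hz : w / A ≤ z ^ 2) :
    contractionFactor A P z = exp (2 * A * z ^ 2 - 1) := by
  refine contractionFactor_of_one_le ?_
  have hAw := le_mul_lambertRoot hA hAΔ hw0 hw
  rw [div_le_iff₀ hA] at hz
  nlinarith [mul_le_mul_of_nonneg_right hΔC (sq_nonneg z)]

lemma optimalPair_mem_feasiblePairs (hA : 0 < A) (hAΔ : A ≤ Δ) (hΔC : Δ ≤ P + A)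
    (hw0 : 0 ≤ w) (hw : w * exp w = exp 1 * A / Δ) :
    (exp (1 - 2 * w) / Δ, sqrt (w / A)) ∈ feasiblePairs A P Δ := by
  have hΔ : 0 < Δ := hA.trans_le hAΔ
  have hsq : sqrt (w / A) ^ 2 = w / A := sq_sqrt (by positivity)
  have hAu : A * (w / A) = w := mul_div_cancel₀ _ hA.ne'
  refine ⟨by positivity, sqrt_nonneg _, ?_, ?_⟩
  · rw [hsq, hAu, exp_one_sub_two_mul_div_mul_exp hA hΔ hw]
  · rw [contractionFactor_of_lambertRoot_div_le hA hAΔ hΔC hw0 hw hsq.ge, hsq, mul_assoc 2, hAu,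
      div_mul_eq_mul_div, div_mul_cancel₀ _ hΔ.ne', ← exp_add]
    norm_num

lemma fst_le_of_mem_feasiblePairs (hA : 0 < A) (hAΔ : A ≤ Δ) (hΔC : Δ ≤ P + A)
    (hw0 : 0 ≤ w) (hw : w * exp w = exp 1 * A / Δ) {p : ℝ × ℝ}
    (hp : p ∈ feasiblePairs A P Δ) : p.1 ≤ exp (1 - 2 * w) / Δ := by
  obtain ⟨l, z⟩ := p
  obtain ⟨-, -, hself, hcontr⟩ := hp
  have hΔ : 0 < Δ := hA.trans_le hAΔ
  rcases le_total (z ^ 2) (w / A) with hz | hz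
  · have hAu : A * (w / A) = w := mul_div_cancel₀ _ hA.ne'
    calc l ≤ z ^ 2 * exp (-(A * z ^ 2)) := le_mul_exp_neg_of_mul_exp_le hself
      _ ≤ w / A * exp (-(A * (w / A))) :=
          mul_exp_neg_mul_le_of_le (by positivity) hz (by rw [hAu]; exact lambertRoot_le_one hA hAΔ hw)
      _ = exp (1 - 2 * w) / Δ := by
          rw [hAu, ← exp_one_sub_two_mul_div_mul_exp hA hΔ hw, mul_assoc, ← exp_add,
            add_neg_cancel, exp_zero, mul_one]
  · rw [contractionFactor_of_lambertRoot_div_le hA hAΔ hΔC hw0 hw hz] at hcontr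
    have hAz : w ≤ A * z ^ 2 := by rwa [div_le_iff₀' hA] at hz
    calc l ≤ exp (-(2 * A * z ^ 2 - 1)) / Δ := le_exp_neg_div_of_mul_exp_mul_le hΔ hcontr
      _ ≤ exp (1 - 2 * w) / Δ := by gcongr; linarith

end Optimum

theorem optimization_locally_stable_general
    (W : ℝ → ℝ)
    (hW : ∀ y, 0 ≤ y → 0 ≤ W y ∧ W y * Real.exp (W y) = y)
    (A P Δ : ℝ) (hA : 0 < A) (hAΔ : A ≤ Δ) (hΔC : Δ ≤ P + A)
    (M : ℝ → ℝ)
    (hM : ∀ z : ℝ, M z =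
      if (P + A) * z ^ 2 ≤ 1 then
        (P + A) * z ^ 2 * Real.exp (-((P - A) * z ^ 2))
      else Real.exp (2 * A * z ^ 2 - 1))
    (S : Set (ℝ × ℝ))
    (hS : S = {p : ℝ × ℝ | 0 ≤ p.1 ∧ 0 ≤ p.2 ∧
      p.1 * Real.exp (A * p.2 ^ 2) ≤ p.2 ^ 2 ∧ p.1 * M p.2 * Δ ≤ 1}) :
    IsGreatest (Prod.fst '' S)
      (Real.exp (1 - 2 * W (Real.exp 1 * A / Δ)) / Δ) ∧
    (Real.exp (1 - 2 * W (Real.exp 1 * A / Δ)) / Δ,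
      Real.sqrt (W (Real.exp 1 * A / Δ) / A)) ∈ S := by
  obtain rfl : M = contractionFactor A P := funext hM
  obtain rfl : S = feasiblePairs A P Δ := hS
  have hΔ : 0 < Δ := hA.trans_le hAΔ
  obtain ⟨hw0, hw⟩ := hW (exp 1 * A / Δ) (by positivity)
  have hmem := optimalPair_mem_feasiblePairs hA hAΔ hΔC hw0 hw
  refine ⟨⟨⟨_, hmem, rfl⟩, ?_⟩, hmem⟩
  rintro _ ⟨p, hp, rfl⟩
  exact fst_le_of_mem_feasiblePairs hA hAΔ hΔC hw0 hw hp

/-- Locally stable case of the optimization problem: with `A > 0`, `P ≥ 0`,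
`Cφ = P + A`, `A ≤ Δ ≤ Cφ`, and
`M(z̃) = Cφ z̃² e^{−(P−A)z̃²}` for `Cφ z̃² ≤ 1`, `M(z̃) = e^{2Az̃²−1}` otherwise,
the maximum of `λ̃` over pairs `(λ̃, z̃) ∈ ℝ≥0²` satisfying the self-map
condition `λ̃ e^{Az̃²} ≤ z̃²` and the contraction condition `λ̃ M(z̃) Δ ≤ 1`
equals `e^{1−2W(eA/Δ)}/Δ`, attained at `z̃ = √(W(eA/Δ)/A)`.
Here `W` is the principal Lambert W function, characterized by
`W(y)e^{W(y)} = y` and `W(y) ≥ 0` for `y ≥ 0`. -/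
theorem optimization_locally_stable
    (W : ℝ → ℝ)
    (hW : ∀ y, 0 ≤ y → 0 ≤ W y ∧ W y * Real.exp (W y) = y)
    (A P Δ : ℝ) (hA : 0 < A) (hP : 0 ≤ P) (hAΔ : A ≤ Δ) (hΔC : Δ ≤ P + A)
    (M : ℝ → ℝ)
    (hM : ∀ z : ℝ, M z =
      if (P + A) * z ^ 2 ≤ 1 then
        (P + A) * z ^ 2 * Real.exp (-((P - A) * z ^ 2))
      else Real.exp (2 * A * z ^ 2 - 1))
    (S : Set (ℝ × ℝ))
    (hS : S = {p : ℝ × ℝ | 0 ≤ p.1 ∧ 0 ≤ p.2 ∧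
      p.1 * Real.exp (A * p.2 ^ 2) ≤ p.2 ^ 2 ∧ p.1 * M p.2 * Δ ≤ 1}) :
    IsGreatest (Prod.fst '' S)
      (Real.exp (1 - 2 * W (Real.exp 1 * A / Δ)) / Δ) ∧
    (Real.exp (1 - 2 * W (Real.exp 1 * A / Δ)) / Δ,
      Real.sqrt (W (Real.exp 1 * A / Δ) / A)) ∈ S :=
  optimization_locally_stable_general W hW A P Δ hA hAΔ hΔC M hM S hS
end
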